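/- arXiv:1605.07198 — 3 statements merged into one kernel-verified Lean document; each statement's English description precedes it below -/
import Mathlib

section
/- Saddle-point block eigenvalue result (Murphy–Golub–Wathen): let A ∈ ℝ^{n×n} be symmetric positive definite, B ∈ ℝ^{m×n} of full row rank, S = B A⁻¹ Bᵀ the (negative) Schur complement, and 𝔸 = [[A, Bᵀ],[B, 0]], 𝔹 = diag(A, S)⁻¹. Then the spectrum of 𝔹𝔸 is contained in {1, (1+√5)/2, (1−√5)/2}. -/
/-!
Full row rank of `B` makes `S = B A⁻¹ Bᵀ` positive definite, hence invertible, and then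
`S⁻¹ B · A⁻¹ Bᵀ = 1`. With `P = A⁻¹ Bᵀ` and `Q = S⁻¹ B` the preconditioned matrix is
`T = [[1, P], [Q, 0]]`, and `QP = 1` forces `(T - 1)(T² - T - 1) = 0`. Every spectral value is
therefore a root of `(x - 1)(x² - x - 1)`.
-/

open Matrix Polynomial
open scoped ComplexOrder

namespace Matrix

variable {K m n : Type*} [Field K] [Fintype n]

theorem mulVec_injective_of_rank_eq_card_width {A : Matrix m n K}
    (h : A.rank = Fintype.card n) : Function.Injective A.mulVec := by
  have hrank := A.mulVecLin.finrank_range_add_finrank_ker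
  rw [← rank, h, Module.finrank_fintype_fun_eq_card] at hrank
  exact LinearMap.ker_eq_bot.mp (Submodule.finrank_eq_zero.mp
    (show Module.finrank K (LinearMap.ker A.mulVecLin) = 0 by omega))

theorem vecMul_injective_of_rank_eq_card_height [Fintype m] {A : Matrix m n K}
    (h : A.rank = Fintype.card m) : Function.Injective A.vecMul := by
  have := mulVec_injective_of_rank_eq_card_width (A := Aᵀ) (by rwa [rank_transpose])
  intro x y hxy
  exact this (by rwa [mulVec_transpose, mulVec_transpose])

end Matrix

theorem Matrix.PosDef.mul_inv_mul_conjTranspose_of_rank_eq_card {𝕜 m n : Type*} [RCLike 𝕜]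
    [Fintype m] [Fintype n] [DecidableEq n] {A : Matrix n n 𝕜} (hA : A.PosDef) {B : Matrix m n 𝕜}
    (hB : B.rank = Fintype.card m) : (B * A⁻¹ * Bᴴ).PosDef :=
  hA.inv.mul_mul_conjTranspose_same (vecMul_injective_of_rank_eq_card_height hB)

theorem Matrix.fromBlocks_one_sub_one_mul_sq_sub_sub_one {R m n : Type*} [Ring R] [Fintype m]
    [Fintype n] [DecidableEq m] [DecidableEq n] (P : Matrix n m R) (Q : Matrix m n R)
    (hQP : Q * P = 1) :
    (fromBlocks 1 P Q 0 - 1) * (fromBlocks 1 P Q 0 ^ 2 - fromBlocks 1 P Q 0 - 1) = 0 := by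
  -- the second factor is `fromBlocks (P * Q - 1) 0 0 0`, which the first kills since `QP = 1`
  simp only [sq, fromBlocks_multiply, ← fromBlocks_one, sub_eq_add_neg, fromBlocks_neg,
    fromBlocks_add]
  simp [hQP, Matrix.mul_add, ← Matrix.mul_assoc]

theorem spectrum.eval_eq_zero_of_aeval_eq_zero {𝕜 A : Type*} [Field 𝕜] [Ring A] [Algebra 𝕜 A]
    {a : A} {p : 𝕜[X]} (hp : aeval a p = 0) {x : 𝕜} (hx : x ∈ spectrum 𝕜 a) :
    p.eval x = 0 := by
  have hmem := spectrum.subset_polynomial_aeval a p ⟨x, hx, rfl⟩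
  rw [hp] at hmem
  by_contra hne
  exact hmem <| by
    simpa [spectrum.mem_resolventSet_iff] using (Ne.isUnit hne).map (algebraMap 𝕜 A)

theorem eq_one_or_gold_or_goldConj_of_mul_eq_zero {x : ℝ} (h : (x - 1) * (x ^ 2 - x - 1) = 0) :
    x ∈ ({1, (1 + Real.sqrt 5) / 2, (1 - Real.sqrt 5) / 2} : Set ℝ) := by
  have hs5 : Real.sqrt 5 ^ 2 = 5 := Real.sq_sqrt (by norm_num)
  have hfac : (x - 1) * ((x - (1 + Real.sqrt 5) / 2) * (x - (1 - Real.sqrt 5) / 2)) = 0 := by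
    linear_combination h - ((x - 1) / 4) * hs5
  simp only [Set.mem_insert_iff, Set.mem_singleton_iff]
  rcases mul_eq_zero.mp hfac with h1 | h2
  · exact Or.inl (sub_eq_zero.mp h1)
  rcases mul_eq_zero.mp h2 with h2 | h3
  · exact Or.inr (Or.inl (sub_eq_zero.mp h2))
  · exact Or.inr (Or.inr (sub_eq_zero.mp h3))

/-- Murphy–Golub–Wathen: for `A` SPD, `B` of full row rank,
`S = B A⁻¹ Bᵀ`, the block-diagonally preconditioned saddle point matrix
`𝔹 𝔸 = diag(A, S)⁻¹ [[A, Bᵀ],[B, 0]]` has spectrum contained in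
`{1, (1+√5)/2, (1−√5)/2}`. -/
theorem murphy_golub_wathen_three_eigenvalues
    (n m : ℕ) (A : Matrix (Fin n) (Fin n) ℝ) (B : Matrix (Fin m) (Fin n) ℝ)
    (hA : A.PosDef) (hB : B.rank = m)
    (S : Matrix (Fin m) (Fin m) ℝ) (hS : S = B * A⁻¹ * Bᵀ)
    (𝔸 𝔹 : Matrix (Fin n ⊕ Fin m) (Fin n ⊕ Fin m) ℝ)
    (h𝔸 : 𝔸 = Matrix.fromBlocks A Bᵀ B 0)
    (h𝔹 : 𝔹 = Matrix.fromBlocks A⁻¹ 0 0 S⁻¹) :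
    spectrum ℝ (𝔹 * 𝔸) ⊆
      ({1, (1 + Real.sqrt 5) / 2, (1 - Real.sqrt 5) / 2} : Set ℝ) := by
  have hAinv : A⁻¹ * A = 1 := nonsing_inv_mul A hA.det_pos.ne'.isUnit
  have hSpos : S.PosDef := by
    simpa [hS] using hA.mul_inv_mul_conjTranspose_of_rank_eq_card (B := B) (by simpa using hB)
  have hSinv : S⁻¹ * S = 1 := nonsing_inv_mul S hSpos.det_pos.ne'.isUnit
  have hblocks : 𝔹 * 𝔸 = fromBlocks 1 (A⁻¹ * Bᵀ) (S⁻¹ * B) 0 := by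
    simp [h𝔸, h𝔹, fromBlocks_multiply, hAinv]
  have hQP : S⁻¹ * B * (A⁻¹ * Bᵀ) = 1 := by
    rw [Matrix.mul_assoc, ← Matrix.mul_assoc B, ← hS, hSinv]
  have hannihilates : aeval (𝔹 * 𝔸) ((X - 1) * (X ^ 2 - X - 1) : ℝ[X]) = 0 := by
    simpa [hblocks] using fromBlocks_one_sub_one_mul_sq_sub_sub_one _ _ hQP
  intro x hx
  apply eq_one_or_gold_or_goldConj_of_mul_eq_zero
  simpa only [eval_mul, eval_sub, eval_pow, eval_X, eval_one] using
    spectrum.eval_eq_zero_of_aeval_eq_zero hannihilates hx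
end

section
/- Rusten–Winther interval bounds: let 𝒜 = [[I, D],[Dᵀ, 0]] with D ∈ ℝ^{n×m}, m ≤ n, D of full column rank, σ_min and σ_max the smallest and largest singular values of D. Then every eigenvalue of 𝒜 lies in I⁻ ∪ I⁺ where I⁻ = [(1−√(1+4σ²_max))/2, (1−√(1+4σ²_min))/2] and I⁺ = [1, (1+√(1+4σ²_max))/2]. -/
open Matrix

lemma exists_eigenvector_of_mem_spectrum {k : Type*} [Fintype k] [DecidableEq k]
    {A : Matrix k k ℝ} {μ : ℝ} (h : μ ∈ spectrum ℝ A) :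
    ∃ v : k → ℝ, v ≠ 0 ∧ A.mulVec v = μ • v := by
  rw [← AlgEquiv.spectrum_eq (Matrix.toLinAlgEquiv' : Matrix k k ℝ ≃ₐ[ℝ] _),
    ← Module.End.hasEigenvalue_iff_mem_spectrum] at h
  obtain ⟨v, hv⟩ := h.exists_hasEigenvector
  refine ⟨v, hv.right, ?_⟩
  have := hv.apply_eq_smul
  exact this

/-- Rusten–Winther: every eigenvalue of the saddle point matrix
`𝒜 = [[I, D],[Dᵀ, 0]]`, where `D` has full column rank and extreme singular
values `σmin ≤ σmax` (i.e. `σmin²‖x‖² ≤ ‖Dx‖² ≤ σmax²‖x‖²`), lies in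
`I⁻ ∪ I⁺` with `I⁻ = [(1−√(1+4σmax²))/2, (1−√(1+4σmin²))/2]` and
`I⁺ = [1, (1+√(1+4σmax²))/2]`. -/
theorem rusten_winther_interval_bounds
    (n m : ℕ) (hmn : m ≤ n) (D : Matrix (Fin n) (Fin m) ℝ)
    (hD : D.rank = m)
    (σmin σmax : ℝ) (h0 : 0 ≤ σmin) (hσ : σmin ≤ σmax)
    (hlow : ∀ x : Fin m → ℝ, σmin ^ 2 * (x ⬝ᵥ x) ≤ (D.mulVec x) ⬝ᵥ (D.mulVec x))
    (hup : ∀ x : Fin m → ℝ, (D.mulVec x) ⬝ᵥ (D.mulVec x) ≤ σmax ^ 2 * (x ⬝ᵥ x))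
    (𝒜 : Matrix (Fin n ⊕ Fin m) (Fin n ⊕ Fin m) ℝ)
    (h𝒜 : 𝒜 = Matrix.fromBlocks 1 D Dᵀ 0) :
    ∀ μ ∈ spectrum ℝ 𝒜,
      μ ∈ Set.Icc ((1 - Real.sqrt (1 + 4 * σmax ^ 2)) / 2)
                  ((1 - Real.sqrt (1 + 4 * σmin ^ 2)) / 2)
        ∪ Set.Icc (1 : ℝ) ((1 + Real.sqrt (1 + 4 * σmax ^ 2)) / 2) := by
  intro μ hμ
  set s := Real.sqrt (1 + 4 * σmin ^ 2) with hs
  set t := Real.sqrt (1 + 4 * σmax ^ 2) with ht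
  have hs2 : s ^ 2 = 1 + 4 * σmin ^ 2 := Real.sq_sqrt (by positivity)
  have ht2 : t ^ 2 = 1 + 4 * σmax ^ 2 := Real.sq_sqrt (by positivity)
  have hs0 : 0 ≤ s := Real.sqrt_nonneg _
  have ht0 : 0 ≤ t := Real.sqrt_nonneg _
  have ht1 : 1 ≤ t := by nlinarith
  obtain ⟨v, hv0, hv⟩ := exists_eigenvector_of_mem_spectrum hμ
  by_cases hμ1 : μ = 1
  · right
    subst hμ1
    constructor <;> [exact le_refl 1; linarith]
  -- extract block equations
  set x : Fin n → ℝ := v ∘ Sum.inl with hx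
  set y : Fin m → ℝ := v ∘ Sum.inr with hy
  have hvelim : v = Sum.elim x y := by
    funext i; cases i <;> rfl
  rw [h𝒜, hvelim, Matrix.fromBlocks_mulVec] at hv
  have h1 : (1 : Matrix (Fin n) (Fin n) ℝ).mulVec x + D.mulVec y = μ • x := by
    have := congrArg (fun f => f ∘ Sum.inl) hv
    funext i
    exact congrFun (congrArg (fun f i => f (Sum.inl i)) hv) i
  have h2 : Dᵀ.mulVec x + (0 : Matrix (Fin m) (Fin m) ℝ).mulVec y = μ • y := by
    funext i
    exact congrFun (congrArg (fun f i => f (Sum.inr i)) hv) i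
  rw [Matrix.one_mulVec] at h1
  rw [Matrix.zero_mulVec, add_zero] at h2
  have hDy : D.mulVec y = (μ - 1) • x := by
    have := h1
    funext i
    have := congrFun h1 i
    simp only [Pi.add_apply, Pi.smul_apply, smul_eq_mul] at this ⊢
    linarith
  -- y ≠ 0
  have hy0 : y ≠ 0 := by
    intro h
    apply hv0
    have hx0 : x = 0 := by
      have : D.mulVec y = 0 := by rw [h, Matrix.mulVec_zero]
      rw [this] at hDy
      funext i
      have := congrFun hDy i
      simp only [Pi.zero_apply, Pi.smul_apply, smul_eq_mul] at this ⊢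
      rcases mul_eq_zero.mp this.symm with h' | h'
      · exact absurd (by linarith) hμ1
      · exact h'
    rw [hvelim, hx0, h]
    funext i; cases i <;> rfl
  have hnn : 0 ≤ y ⬝ᵥ y := by
    simp only [dotProduct]
    exact Finset.sum_nonneg fun i _ => mul_self_nonneg _
  have hyy : 0 < y ⬝ᵥ y := by
    rcases lt_or_eq_of_le hnn with h | h
    · exact h
    · exact absurd ((dotProduct_self_eq_zero).mp h.symm) hy0
  -- key identity: Dy ⬝ Dy = μ(μ-1) (y⬝y)
  have hxDy : x ⬝ᵥ D.mulVec y = μ * (y ⬝ᵥ y) := by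
    rw [Matrix.dotProduct_mulVec, ← Matrix.mulVec_transpose, h2]
    simp [smul_dotProduct]
  have hkey : (D.mulVec y) ⬝ᵥ (D.mulVec y) = μ * (μ - 1) * (y ⬝ᵥ y) := by
    rw [hDy] at hxDy ⊢
    simp only [smul_dotProduct, dotProduct_smul, smul_eq_mul] at hxDy ⊢
    linear_combination (μ - 1) * hxDy
  have hlo := hlow y
  have hhi := hup y
  rw [hkey] at hlo hhi
  have hA : σmin ^ 2 ≤ μ * (μ - 1) := le_of_mul_le_mul_right (by linarith [mul_comm (σmin^2) (y ⬝ᵥ y)]) hyy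
  have hB : μ * (μ - 1) ≤ σmax ^ 2 := le_of_mul_le_mul_right (by linarith [mul_comm (σmax^2) (y ⬝ᵥ y)]) hyy
  rcases le_or_gt 1 μ with hge | hlt
  · right
    refine ⟨hge, ?_⟩
    nlinarith
  · left
    have hμ0 : μ ≤ 0 := by nlinarith
    constructor
    · nlinarith
    · nlinarith
end

section
/- Inf-sup condition for the W-cap formulation: with W and Q as in the W-cap setting, for every q ∈ Q = H⁻¹(Γ), sup_{w∈W, w≠0} ⟨q, εTu − v⟩ / ‖w‖_W ≥ ‖q‖_{-1}; i.e., the inf-sup constant is at least 1, independently of ε. -/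
/-!
Taking `u = 0` and `v = -v'` turns the quotient into `q v' / ‖v'‖`, whose supremum over `v' ≠ 0`
is `‖q‖`. The quotient is bounded by `2 ‖q‖`, so the supremum over `W` is a genuine one, and it is
nonnegative because the quotient is odd in `(u, v)`.
-/

lemma Real.sSup_nonneg_of_forall_neg_mem {S : Set ℝ} (hS : ∀ r ∈ S, -r ∈ S) : 0 ≤ sSup S := by
  by_cases hbdd : BddAbove S
  · rcases S.eq_empty_or_nonempty with rfl | ⟨r, hr⟩
    · rw [Real.sSup_empty]
    · linarith [le_csSup hbdd hr, le_csSup hbdd (hS r hr)]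
  · rw [Real.sSup_of_not_bddAbove hbdd]

lemma StrongDual.norm_le_of_forall_div_norm_le {V : Type*} [SeminormedAddCommGroup V]
    [NormedSpace ℝ V] (q : StrongDual ℝ V) {b : ℝ} (hb : 0 ≤ b)
    (h : ∀ v, q v / ‖v‖ ≤ b) : ‖q‖ ≤ b := by
  refine q.opNorm_le_bound hb fun v => ?_
  rcases (norm_nonneg v).eq_or_lt with hv | hv
  · simpa [← hv] using q.le_opNorm v
  · have hpos := (div_le_iff₀ hv).1 (h v)
    have hneg := (div_le_iff₀ (by rwa [norm_neg])).1 (h (-v))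
    rw [map_neg, norm_neg] at hneg
    exact abs_le.2 ⟨by linarith, hpos⟩

section InfSupQuotient

variable {U V : Type*} [SeminormedAddCommGroup U] [NormedSpace ℝ U]
  [SeminormedAddCommGroup V] [NormedSpace ℝ V]

/-- `⟨q, ε T u - v⟩ / ‖(u, v)‖_W`. -/
noncomputable def infSupQuotient (T : U →L[ℝ] V) (ε : ℝ) (q : StrongDual ℝ V) (u : U) (v : V) :
    ℝ :=
  q (ε • T u - v) / √(‖u‖ ^ 2 + ε ^ 2 * ‖T u‖ ^ 2 + ‖v‖ ^ 2)

variable (T : U →L[ℝ] V) (ε : ℝ) (q : StrongDual ℝ V)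

lemma infSupQuotient_neg (u : U) (v : V) :
    infSupQuotient T ε q (-u) (-v) = -infSupQuotient T ε q u v := by
  simp only [infSupQuotient, map_neg, smul_neg, norm_neg]
  rw [← neg_sub', map_neg, neg_div]

lemma infSupQuotient_zero_neg (v : V) : infSupQuotient T ε q 0 (-v) = q v / ‖v‖ := by
  simp [infSupQuotient, Real.sqrt_sq (norm_nonneg v)]

lemma infSupQuotient_le (u : U) (v : V) : infSupQuotient T ε q u v ≤ 2 * ‖q‖ := by
  set D := √(‖u‖ ^ 2 + ε ^ 2 * ‖T u‖ ^ 2 + ‖v‖ ^ 2)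
  have hTu : |ε| * ‖T u‖ ≤ D := by
    rw [← abs_norm (T u), ← abs_mul]
    exact Real.abs_le_sqrt (by nlinarith [sq_nonneg ‖u‖, sq_nonneg ‖v‖])
  have hv : ‖v‖ ≤ D :=
    Real.le_sqrt_of_sq_le (by nlinarith [sq_nonneg ‖u‖, sq_nonneg (ε * ‖T u‖)])
  refine div_le_of_le_mul₀ (Real.sqrt_nonneg _) (by positivity) ?_
  calc q (ε • T u - v) ≤ ‖q‖ * ‖ε • T u - v‖ := (le_abs_self _).trans (q.le_opNorm _)
    _ ≤ ‖q‖ * (|ε| * ‖T u‖ + ‖v‖) := by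
      gcongr
      exact (norm_sub_le _ _).trans_eq (by rw [norm_smul, Real.norm_eq_abs])
    _ ≤ 2 * ‖q‖ * D := by nlinarith [norm_nonneg q]

end InfSupQuotient

theorem wcap_inf_sup_general
    (U V : Type*)
    [NormedAddCommGroup U] [InnerProductSpace ℝ U]
    [NormedAddCommGroup V] [InnerProductSpace ℝ V]
    (T : U →L[ℝ] V) (ε : ℝ) :
    ∀ q : StrongDual ℝ V,
      ‖q‖ ≤ sSup {r : ℝ | ∃ (u : U) (v : V), (u, v) ≠ 0 ∧
        r = q (ε • T u - v) /
          Real.sqrt (‖u‖ ^ 2 + ε ^ 2 * ‖T u‖ ^ 2 + ‖v‖ ^ 2)} := by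
  intro q
  change ‖q‖ ≤ sSup {r | ∃ u v, (u, v) ≠ 0 ∧ r = infSupQuotient T ε q u v}
  set S : Set ℝ := {r | ∃ u v, (u, v) ≠ 0 ∧ r = infSupQuotient T ε q u v}
  have hbdd : BddAbove S :=
    ⟨2 * ‖q‖, by rintro _ ⟨u, v, -, rfl⟩; exact infSupQuotient_le T ε q u v⟩
  have hnonneg : 0 ≤ sSup S := Real.sSup_nonneg_of_forall_neg_mem <| by
    rintro _ ⟨u, v, huv, rfl⟩
    exact ⟨-u, -v, by simpa using huv, (infSupQuotient_neg T ε q u v).symm⟩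
  refine q.norm_le_of_forall_div_norm_le hnonneg fun v => ?_
  rcases eq_or_ne v 0 with rfl | hv
  · simpa using hnonneg
  · exact le_csSup hbdd ⟨0, -v, by simpa using hv, (infSupQuotient_zero_neg T ε q v).symm⟩

/-- inf-sup condition for the W-cap formulation. With
`W = U × V` normed by `‖(u,v)‖_W² = |u|² + ε²|Tu|² + |v|²` and `Q = V*`
with the dual norm, for every `q ∈ Q` we have
`sup_{0 ≠ (u,v) ∈ W} ⟨q, εTu − v⟩ / ‖(u,v)‖_W ≥ ‖q‖`, i.e. the inf-sup
constant is at least `1`, independently of `ε`. -/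
theorem wcap_inf_sup
    (U V : Type*)
    [NormedAddCommGroup U] [InnerProductSpace ℝ U] [CompleteSpace U]
    [NormedAddCommGroup V] [InnerProductSpace ℝ V] [CompleteSpace V]
    (T : U →L[ℝ] V) (ε : ℝ) (hε : 0 < ε) :
    ∀ q : StrongDual ℝ V,
      ‖q‖ ≤ sSup {r : ℝ | ∃ (u : U) (v : V), (u, v) ≠ 0 ∧
        r = q (ε • T u - v) /
          Real.sqrt (‖u‖ ^ 2 + ε ^ 2 * ‖T u‖ ^ 2 + ‖v‖ ^ 2)} :=
  wcap_inf_sup_general U V T ε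
end
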